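/- Let U : [−1,1] → ℝ be continuous on [−1,1] and twice continuously differentiable on (−1,1), and let u, p be the associated axisymmetric no-swirl velocity field and pressure, with associated stress tensor T_{ij}. Then for every ε > 0, R > 0, every continuous function ψ : ℝ → ℝ, and each j ∈ {1,2}, the surface integral of T_{ij} ν_i ψ(x₃) over the cylinder {|x'| = ε, −R < x₃ < R} vanishes: ∫_{−R}^{R} ∫_{0}^{2π} ( Σ_{i=1}^{3} T_{ij}(ε cos ϑ, ε sin ϑ, z) ν_i(ϑ) ) ψ(z) ε dϑ dz = 0, where ν(ϑ) := (cos ϑ, sin ϑ, 0) is the outward unit normal of the cylinder. -/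

import Mathlib

open Set intervalIntegral

/-- The Euclidean norm of `x' = (x₁, x₂)`, the first two coordinates of `x ∈ ℝ³`. -/
noncomputable def primeNorm3 (x : EuclideanSpace ℝ (Fin 3)) : ℝ :=
  Real.sqrt (x 0 ^ 2 + x 1 ^ 2)

/-- The axisymmetric no-swirl velocity field associated with the profile `U`. -/
noncomputable def velField (U : ℝ → ℝ) (x : EuclideanSpace ℝ (Fin 3)) :
    EuclideanSpace ℝ (Fin 3) :=
  WithLp.toLp 2 fun (i : Fin 3) =>
    if i = 0 then
      x 0 * deriv U (x 2 / ‖x‖) / ‖x‖ ^ 2 + x 0 * x 2 * U (x 2 / ‖x‖) / (‖x‖ * primeNorm3 x ^ 2)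
    else if i = 1 then
      x 1 * deriv U (x 2 / ‖x‖) / ‖x‖ ^ 2 + x 1 * x 2 * U (x 2 / ‖x‖) / (‖x‖ * primeNorm3 x ^ 2)
    else
      x 2 * deriv U (x 2 / ‖x‖) / ‖x‖ ^ 2 - U (x 2 / ‖x‖) / ‖x‖

/-- The pressure associated with the profile `U`. -/
noncomputable def pressure (U : ℝ → ℝ) (x : EuclideanSpace ℝ (Fin 3)) : ℝ :=
  deriv U (x 2 / ‖x‖) / ‖x‖ ^ 2 - (U (x 2 / ‖x‖)) ^ 2 / (2 * primeNorm3 x ^ 2)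

/-- The stress tensor `T_{ij} = p δ_{ij} + u_i u_j - ∂_{x_j} u_i - ∂_{x_i} u_j`. -/
noncomputable def stressT (U : ℝ → ℝ) (i j : Fin 3) (x : EuclideanSpace ℝ (Fin 3)) : ℝ :=
  pressure U x * (if i = j then 1 else 0) + velField U x i * velField U x j
    - fderiv ℝ (fun z => velField U z i) x (EuclideanSpace.single j 1)
    - fderiv ℝ (fun z => velField U z j) x (EuclideanSpace.single i 1)

/-- The point of the cylinder `{|x'| = ε}` with angle `ϑ` and height `z`. -/
noncomputable def cylPt (ε ϑ z : ℝ) : EuclideanSpace ℝ (Fin 3) :=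
  WithLp.toLp 2 fun (i : Fin 3) => if i = 0 then ε * Real.cos ϑ else if i = 1 then ε * Real.sin ϑ else z

/-!
The integrand is antiperiodic in `ϑ` with antiperiod `π`. Indeed `ϑ ↦ ϑ + π` moves the point of
the cylinder by the half-turn `H : (x₁, x₂, x₃) ↦ (-x₁, -x₂, x₃)` about the symmetry axis, and
`u`, `p` are equivariant under `H`: `u_i ∘ H = s_i u_i` and `p ∘ H = p`, with `s = (-1, -1, 1)`.
Hence `T_{ij} ∘ H = s_i s_j T_{ij}` (this holds even for the junk values of `fderiv`, by the chain
rule for the linear equivalence `H`), while `ν_i(ϑ + π) = s_i ν_i(ϑ)`. So `Σ_i T_{ij} ν_i` changes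
by the factor `s_j = -1`, and an antiperiodic function integrates to zero over two antiperiods.
-/

theorem Function.Antiperiodic.intervalIntegral_eq_zero {E : Type*} [NormedAddCommGroup E]
    [NormedSpace ℝ E] {f : ℝ → E} {c : ℝ} (hf : Function.Antiperiodic f c) (a : ℝ) :
    ∫ x in a..a + 2 * c, f x = 0 := by
  have h : ∫ x in a..a + 2 * c, f x = -∫ x in a..a + 2 * c, f x := calc
    _ = ∫ x in a + c..a + c + 2 * c, f x := hf.periodic_two_mul.intervalIntegral_add_eq a (a + c)
    _ = ∫ x in a..a + 2 * c, f (x + c) := by rw [integral_comp_add_right]; ring_nf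
    _ = -∫ x in a..a + 2 * c, f x := by simp_rw [hf _, intervalIntegral.integral_neg]
  rw [eq_neg_iff_add_eq_zero, ← two_smul ℝ, smul_eq_zero] at h
  exact h.resolve_left two_ne_zero

theorem fderiv_apply_map_of_comp_eq_smul {𝕜 E F : Type*} [NontriviallyNormedField 𝕜]
    [NormedAddCommGroup E] [NormedSpace 𝕜 E] [NormedAddCommGroup F] [NormedSpace 𝕜 F]
    (L : E ≃L[𝕜] E) {f : E → F} (c : 𝕜) (hf : ∀ x, f (L x) = c • f x) (x v : E) :
    fderiv 𝕜 f (L x) (L v) = c • fderiv 𝕜 f x v := by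
  have h := L.comp_right_fderiv (f := f) (x := x)
  rw [show f ∘ L = c • f from funext hf, fderiv_const_smul_field] at h
  exact (congrArg (· v) h).symm

noncomputable def halfTurnSign (i : Fin 3) : ℝ := if i = 2 then 1 else -1

theorem halfTurnSign_mul_self (i : Fin 3) : halfTurnSign i * halfTurnSign i = 1 := by
  unfold halfTurnSign; split_ifs <;> norm_num

noncomputable def halfTurn : EuclideanSpace ℝ (Fin 3) ≃ₗᵢ[ℝ] EuclideanSpace ℝ (Fin 3) :=
  .piLpCongrRight 2 fun i => if i = 2 then .refl ℝ ℝ else .neg ℝ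

theorem halfTurn_apply (x : EuclideanSpace ℝ (Fin 3)) (i : Fin 3) :
    halfTurn x i = halfTurnSign i * x i := by
  simp only [halfTurn, halfTurnSign, LinearIsometryEquiv.piLpCongrRight_apply, PiLp.toLp_apply]
  split_ifs <;> simp

theorem halfTurn_single (j : Fin 3) :
    halfTurn (EuclideanSpace.single j 1) = halfTurnSign j • EuclideanSpace.single j 1 := by
  ext i
  rw [halfTurn_apply, PiLp.smul_apply, PiLp.single_apply]
  split_ifs with h <;> simp [h]

theorem primeNorm3_halfTurn (x : EuclideanSpace ℝ (Fin 3)) :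
    primeNorm3 (halfTurn x) = primeNorm3 x := by
  simp [primeNorm3, halfTurn_apply, halfTurnSign]

theorem velField_halfTurn (U : ℝ → ℝ) (x : EuclideanSpace ℝ (Fin 3)) (i : Fin 3) :
    velField U (halfTurn x) i = halfTurnSign i * velField U x i := by
  fin_cases i <;>
    simp [velField, halfTurn_apply, halfTurnSign, primeNorm3_halfTurn] <;> ring

theorem pressure_halfTurn (U : ℝ → ℝ) (x : EuclideanSpace ℝ (Fin 3)) :
    pressure U (halfTurn x) = pressure U x := by
  simp [pressure, halfTurn_apply, halfTurnSign, primeNorm3_halfTurn]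

theorem fderiv_velField_halfTurn (U : ℝ → ℝ) (i j : Fin 3) (x : EuclideanSpace ℝ (Fin 3)) :
    fderiv ℝ (fun z => velField U z i) (halfTurn x) (EuclideanSpace.single j 1)
      = halfTurnSign i * halfTurnSign j
          * fderiv ℝ (fun z => velField U z i) x (EuclideanSpace.single j 1) := by
  have hsingle : EuclideanSpace.single j (1 : ℝ)
      = halfTurnSign j • halfTurn (EuclideanSpace.single j 1) := by
    rw [halfTurn_single, smul_smul, halfTurnSign_mul_self, one_smul]
  have hchain := fderiv_apply_map_of_comp_eq_smul halfTurn.toContinuousLinearEquiv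
    (f := fun z => velField U z i) (halfTurnSign i) (velField_halfTurn U · i) x
    (EuclideanSpace.single j 1)
  rw [LinearIsometryEquiv.coe_toContinuousLinearEquiv, smul_eq_mul] at hchain
  conv_lhs => rw [hsingle, map_smul, smul_eq_mul, hchain]
  ring

theorem stressT_halfTurn (U : ℝ → ℝ) (i j : Fin 3) (x : EuclideanSpace ℝ (Fin 3)) :
    stressT U i j (halfTurn x) = halfTurnSign i * halfTurnSign j * stressT U i j x := by
  unfold stressT
  rw [pressure_halfTurn, velField_halfTurn, velField_halfTurn, fderiv_velField_halfTurn,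
    fderiv_velField_halfTurn]
  split_ifs with h
  · subst h
    linear_combination (-pressure U x) * halfTurnSign_mul_self i
  · ring

theorem sum_stressT_halfTurn (U : ℝ → ℝ) (j : Fin 3) (x : EuclideanSpace ℝ (Fin 3))
    (n : Fin 3 → ℝ) :
    ∑ i, stressT U i j (halfTurn x) * (halfTurnSign i * n i)
      = halfTurnSign j * ∑ i, stressT U i j x * n i := by
  rw [Finset.mul_sum]
  refine Finset.sum_congr rfl fun i _ => ?_
  rw [stressT_halfTurn]
  linear_combination halfTurnSign j * stressT U i j x * n i * halfTurnSign_mul_self i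

theorem cylPt_add_pi (ε ϑ z : ℝ) : cylPt ε (ϑ + Real.pi) z = halfTurn (cylPt ε ϑ z) := by
  ext i
  rw [halfTurn_apply]
  fin_cases i <;> simp [cylPt, halfTurnSign, Real.cos_add_pi, Real.sin_add_pi]

theorem cylNormal_add_pi (ϑ : ℝ) (i : Fin 3) :
    (if i = 0 then Real.cos (ϑ + Real.pi) else if i = 1 then Real.sin (ϑ + Real.pi) else 0)
      = halfTurnSign i
          * (if i = 0 then Real.cos ϑ else if i = 1 then Real.sin ϑ else 0) := by
  fin_cases i <;> simp [halfTurnSign, Real.cos_add_pi, Real.sin_add_pi]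

theorem stmt16_general (U : ℝ → ℝ)
    (ε R : ℝ) (ψ : ℝ → ℝ)
    (j : Fin 3) (hj : j = 0 ∨ j = 1) :
    (∫ z in (-R)..R, ∫ ϑ in (0 : ℝ)..(2 * Real.pi),
      (∑ i : Fin 3, stressT U i j (cylPt ε ϑ z)
          * (if i = 0 then Real.cos ϑ else if i = 1 then Real.sin ϑ else 0))
        * ψ z * ε) = 0 := by
  have hsign : halfTurnSign j = -1 := by
    rcases hj with rfl | rfl <;> simp [halfTurnSign]
  have hanti : ∀ z, Function.Antiperiodic (fun ϑ => (∑ i : Fin 3, stressT U i j (cylPt ε ϑ z)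
      * (if i = 0 then Real.cos ϑ else if i = 1 then Real.sin ϑ else 0)) * ψ z * ε) Real.pi := by
    intro z ϑ
    simp only [cylPt_add_pi, cylNormal_add_pi, sum_stressT_halfTurn, hsign]
    ring
  simp only [fun z => zero_add (2 * Real.pi) ▸ (hanti z).intervalIntegral_eq_zero 0,
    intervalIntegral.integral_zero]

/-- For `j ∈ {1,2}`, the surface integral of `T_{ij} ν_i ψ(x₃)` over the lateral
boundary of the cylinder `{|x'| = ε, -R < x₃ < R}` vanishes (Lemma 3.2). -/
theorem stmt16 (U : ℝ → ℝ)
    (hUc : ContinuousOn U (Icc (-1) 1)) (hU2 : ContDiffOn ℝ 2 U (Ioo (-1) 1))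
    (ε R : ℝ) (hε : 0 < ε) (hR : 0 < R) (ψ : ℝ → ℝ) (hψ : Continuous ψ)
    (j : Fin 3) (hj : j = 0 ∨ j = 1) :
    (∫ z in (-R)..R, ∫ ϑ in (0 : ℝ)..(2 * Real.pi),
      (∑ i : Fin 3, stressT U i j (cylPt ε ϑ z)
          * (if i = 0 then Real.cos ϑ else if i = 1 then Real.sin ϑ else 0))
        * ψ z * ε) = 0 :=
  stmt16_general U ε R ψ j hj
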